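/- Let X be a multiset of n points in ℤ^d, k dividing n, with cluster size s = n/k, and suppose X contains a submultiset S of s identical points. Let X' = X \ S. If Opt(X, k) ≤ B and s ≥ 4B+1, then Opt(X', k−1) = Opt(X, k), where Opt denotes the minimum cost of an equal clustering under the ℓ_p norm (p ≥ 1). -/

import Mathlib

open Finset

/-- The ℓ_p norm of a real vector, for integer `p ≥ 1`. -/
noncomputable def lpNorm (p : ℕ) {d : ℕ} (x : Fin d → ℝ) : ℝ :=
  (∑ i, |x i| ^ p) ^ ((1 : ℝ) / p)

/-- Cost of a cluster (multiset of integer points) with respect to a given center `c`. -/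
noncomputable def costW (p : ℕ) {d : ℕ} (T : Multiset (Fin d → ℤ)) (c : Fin d → ℝ) : ℝ :=
  (T.map (fun x => lpNorm p (fun i => c i - (x i : ℝ)))).sum

/-- Cost of a cluster: infimum over all centers `c ∈ ℝ^d`. -/
noncomputable def clCost (p : ℕ) {d : ℕ} (T : Multiset (Fin d → ℤ)) : ℝ :=
  sInf (Set.range (costW p T))

/-- Minimum cost of an equal clustering of `P` into `k` clusters of size `s` each. -/
noncomputable def OptCost (p : ℕ) {d : ℕ} (P : Multiset (Fin d → ℤ)) (k s : ℕ) : ℝ :=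
  sInf {r | ∃ X : Fin k → Multiset (Fin d → ℤ),
    (∑ i, X i = P) ∧ (∀ i, (X i).card = s) ∧ r = ∑ i, clCost p (X i)}

/-!
Adding the `s` copies of `a` to a clustering of `P` as one more cluster costs nothing, so
`Opt(P + s·a, k + 1) ≤ Opt(P, k)`. Conversely, fix centers for a near-optimal clustering of
`P + s·a`, of total cost `C ≤ B + 1/4 ≤ s/4`, and let `c₀` be the center nearest to `a`.
All `s` copies of `a` pay at least `dist c₀ a`, so `dist c₀ a ≤ 1/4`. Distinct lattice points are
at distance `≥ 1`, so the points of the cluster `T₀` of `c₀` other than `a` cost almost `1` each,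
and the cheapness of `T₀` forces them to be at most as many as the copies of `a` in `T₀`.
Swap them one by one against copies of `a` lying in other clusters: by the triangle inequality
through `a`, this raises the cost of the other clusters by at most `∑_{y ∈ T₀, y ≠ a} dist a y`,
which is at most the cost of `T₀`. Now `T₀` consists of `s` copies of `a`, and dropping it leaves
a clustering of `P` into `k` clusters of cost at most `C`.
-/

section ClusterCost

variable {ι α E : Type*} [PseudoMetricSpace E] (f : α → E)

def clusterCost (T : Multiset α) (c : E) : ℝ :=
  (T.map fun x => dist c (f x)).sum

theorem clusterCost_nonneg (T : Multiset α) (c : E) : 0 ≤ clusterCost f T c :=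
  Multiset.sum_nonneg fun _ hx => by
    obtain ⟨x, -, rfl⟩ := Multiset.mem_map.mp hx
    exact dist_nonneg

@[simp]
theorem clusterCost_zero (c : E) : clusterCost f 0 c = 0 := by
  simp [clusterCost]

@[simp]
theorem clusterCost_add (T U : Multiset α) (c : E) :
    clusterCost f (T + U) c = clusterCost f T c + clusterCost f U c := by
  simp [clusterCost]

@[simp]
theorem clusterCost_cons (x : α) (T : Multiset α) (c : E) :
    clusterCost f (x ::ₘ T) c = dist c (f x) + clusterCost f T c := by
  simp [clusterCost]

@[simp]
theorem clusterCost_replicate (n : ℕ) (a : α) (c : E) :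
    clusterCost f (Multiset.replicate n a) c = n * dist c (f a) := by
  simp [clusterCost, Multiset.map_replicate]

theorem clusterCost_le_card_mul_dist_add (T : Multiset α) (c c' : E) :
    clusterCost f T c' ≤ T.card * dist c' c + clusterCost f T c := by
  induction T using Multiset.induction_on with
  | empty => simp
  | cons x T ih =>
    simp only [clusterCost_cons, Multiset.card_cons, Nat.cast_succ]
    linarith [dist_triangle c' c (f x)]

variable [DecidableEq α]

theorem clusterCost_eq_count_mul_add_filter (a : α) (T : Multiset α) (c : E) :
    clusterCost f T c = T.count a * dist c (f a) + clusterCost f (T.filter (· ≠ a)) c := by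
  conv_lhs => rw [← Multiset.filter_add_not (· = a) T]
  rw [clusterCost_add, Multiset.filter_eq', clusterCost_replicate]

theorem card_filter_ne_mul_le_clusterCost (hf : Pairwise fun x y => 1 ≤ dist (f x) (f y))
    (a : α) (T : Multiset α) (c : E) :
    (T.filter (· ≠ a)).card * (1 - dist c (f a)) ≤ clusterCost f (T.filter (· ≠ a)) c := by
  rw [← nsmul_eq_mul, clusterCost, ← Multiset.card_map (fun x => dist c (f x))]
  refine Multiset.card_nsmul_le_sum fun _ hx => ?_
  obtain ⟨y, hy, rfl⟩ := Multiset.mem_map.mp hx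
  have hya := hf (Multiset.of_mem_filter hy).symm
  linarith [dist_triangle_left (f a) (f y) c]

theorem exists_count_mul_dist_le_sum [Fintype ι] [Nonempty ι] (c : ι → E) (a : α)
    (X : ι → Multiset α) :
    ∃ i₀, (∑ i, X i).count a * dist (c i₀) (f a) ≤ ∑ i, clusterCost f (X i) (c i) := by
  obtain ⟨i₀, -, hmin⟩ := exists_min_image univ (fun i => dist (c i) (f a)) univ_nonempty
  refine ⟨i₀, ?_⟩
  calc ((∑ i, X i).count a : ℝ) * dist (c i₀) (f a)
      = ∑ i, ((X i).count a : ℝ) * dist (c i₀) (f a) := by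
        rw [Multiset.count_sum', Nat.cast_sum, sum_mul]
    _ ≤ ∑ i, ((X i).count a : ℝ) * dist (c i) (f a) :=
        sum_le_sum fun i _ => mul_le_mul_of_nonneg_left (hmin i (mem_univ i)) (Nat.cast_nonneg _)
    _ ≤ ∑ i, clusterCost f (X i) (c i) := sum_le_sum fun i _ => by
        rw [clusterCost_eq_count_mul_add_filter f a]
        linarith [clusterCost_nonneg f ((X i).filter (· ≠ a)) (c i)]

theorem clusterCost_filter_ne_le (hf : Pairwise fun x y => 1 ≤ dist (f x) (f y)) {a : α}
    {T : Multiset α} {c : E} (hca : 4 * dist c (f a) ≤ 1) (hT : 4 * clusterCost f T c ≤ T.card) :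
    clusterCost f (T.filter (· ≠ a)) (f a) ≤ clusterCost f T c := by
  have hsplit := clusterCost_eq_count_mul_add_filter f a T c
  have hfar := card_filter_ne_mul_le_clusterCost f hf a T c
  have hmove := clusterCost_le_card_mul_dist_add f (T.filter (· ≠ a)) c (f a)
  have hcard := congrArg Multiset.card (Multiset.filter_add_not (· = a) T)
  rw [Multiset.card_add, Multiset.filter_eq', Multiset.card_replicate] at hcard
  have hcard' : (T.count a : ℝ) + (T.filter (· ≠ a)).card = T.card := by exact_mod_cast hcard
  -- With `M` copies of `a` and `u` other points in `T`, cheapness forces `u ≤ M`, so moving the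
  -- center to `a` costs at most `u * dist c (f a) ≤ M * dist c (f a)`.
  rw [dist_comm] at hmove
  nlinarith [dist_nonneg (x := c) (y := f a)]

variable [DecidableEq ι]

theorem exists_swap_of_mem_sum (c : ι → E) {t : Finset ι} {X : ι → Multiset α} {a : α} (y : α)
    (ha : a ∈ ∑ i ∈ t, X i) :
    ∃ X' : ι → Multiset α, a ::ₘ ∑ i ∈ t, X' i = y ::ₘ ∑ i ∈ t, X i ∧
      (∀ i, (X' i).card = (X i).card) ∧
      ∑ i ∈ t, clusterCost f (X' i) (c i) ≤
        ∑ i ∈ t, clusterCost f (X i) (c i) + dist (f a) (f y) := by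
  obtain ⟨i, hit, hai⟩ := Multiset.mem_sum.mp ha
  refine ⟨Function.update X i (y ::ₘ (X i).erase a), ?_, fun j => ?_, ?_⟩
  · rw [sum_update_of_mem hit, sum_eq_add_sum_sdiff_singleton_of_mem hit X,
      ← Multiset.cons_erase hai]
    simp [Multiset.cons_swap a y]
  · rcases eq_or_ne j i with rfl | hji
    · simp [Multiset.card_erase_add_one hai]
    · simp [hji]
  · simp_rw [Function.apply_update (fun j T => clusterCost f T (c j))]
    rw [sum_update_of_mem hit, sum_eq_add_sum_sdiff_singleton_of_mem hit,
      ← Multiset.cons_erase hai]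
    simp only [clusterCost_cons, Multiset.erase_cons_head]
    linarith [dist_triangle (c i) (f a) (f y)]

theorem exists_exchange_of_card_le_count (c : ι → E) (t : Finset ι) (a : α) (R : Multiset α)
    {X : ι → Multiset α}
    (hR : R.card ≤ (∑ i ∈ t, X i).count a) :
    ∃ X' : ι → Multiset α, ∑ i ∈ t, X' i + Multiset.replicate R.card a = ∑ i ∈ t, X i + R ∧
      (∀ i, (X' i).card = (X i).card) ∧
      ∑ i ∈ t, clusterCost f (X' i) (c i) ≤
        ∑ i ∈ t, clusterCost f (X i) (c i) + clusterCost f R (f a) := by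
  induction R using Multiset.induction_on generalizing X with
  | empty => exact ⟨X, by simp, fun _ => rfl, by simp⟩
  | cons y R ih =>
    rw [Multiset.card_cons] at hR
    obtain ⟨X₁, hsum₁, hcard₁, hcost₁⟩ :=
      exists_swap_of_mem_sum f c y (Multiset.count_pos.mp (by omega : 0 < (∑ i ∈ t, X i).count a))
    have hcount := congrArg (Multiset.count a) hsum₁
    rw [Multiset.count_cons_self, Multiset.count_cons] at hcount
    obtain ⟨X₂, hsum₂, hcard₂, hcost₂⟩ := ih (X := X₁) (by split_ifs at hcount <;> omega)
    refine ⟨X₂, ?_, fun i => (hcard₂ i).trans (hcard₁ i), ?_⟩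
    · rw [Multiset.card_cons, Multiset.replicate_succ, Multiset.add_cons, hsum₂,
        ← Multiset.cons_add, hsum₁, Multiset.cons_add, Multiset.add_cons]
    · rw [clusterCost_cons]
      linarith [dist_comm (f a) (f y)]

theorem exists_replicate_cluster_of_clusterCost_filter_ne_le [Fintype ι] {s : ℕ}
    {X : ι → Multiset α} (c : ι → E) {a : α} (hXs : ∀ i, (X i).card = s)
    (ha : Multiset.replicate s a ≤ ∑ i, X i) {i₀ : ι}
    (hi₀ : clusterCost f ((X i₀).filter (· ≠ a)) (f a) ≤ clusterCost f (X i₀) (c i₀)) :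
    ∃ X' : ι → Multiset α, X' i₀ = Multiset.replicate s a ∧ (∀ i, (X' i).card = s) ∧
      ∑ i, X' i = ∑ i, X i ∧
      ∑ i ∈ univ.erase i₀, clusterCost f (X' i) (c i) ≤ ∑ i, clusterCost f (X i) (c i) := by
  set R := (X i₀).filter (· ≠ a)
  set M := (X i₀).count a
  have hsplit : Multiset.replicate M a + R = X i₀ := by
    rw [← Multiset.filter_eq']; exact Multiset.filter_add_not _ _
  have hRs : R.card + M = s := by
    rw [← hXs i₀, ← hsplit, Multiset.card_add, Multiset.card_replicate, add_comm]
  have hrest : ∑ i ∈ univ.erase i₀, X i + X i₀ = ∑ i, X i := sum_erase_add _ _ (mem_univ i₀)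
  have hRcount : R.card ≤ (∑ i ∈ univ.erase i₀, X i).count a := by
    have hcount := congrArg (Multiset.count a) hrest
    rw [Multiset.count_add] at hcount
    have := Multiset.le_count_iff_replicate_le.mpr ha
    omega
  obtain ⟨Y, hYsum, hYcard, hYcost⟩ := exists_exchange_of_card_le_count f c _ a R hRcount
  have herase : ∀ i ∈ univ.erase i₀, Function.update Y i₀ (Multiset.replicate s a) i = Y i :=
    fun i hi => Function.update_of_ne (ne_of_mem_erase hi) _ _
  refine ⟨Function.update Y i₀ (Multiset.replicate s a), by simp, fun i => ?_, ?_, ?_⟩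
  · rcases eq_or_ne i i₀ with rfl | hi
    · simp
    · simp [hi, hYcard, hXs]
  · rw [← add_sum_erase _ _ (mem_univ i₀), sum_congr rfl herase, Function.update_self, ← hRs,
      Multiset.replicate_add, ← hrest, ← hsplit, add_comm, ← add_assoc, hYsum]
    abel
  · rw [sum_congr rfl fun i hi => congrArg (clusterCost f · (c i)) (herase i hi),
      ← add_sum_erase _ _ (mem_univ i₀)]
    linarith

theorem exists_replicate_cluster_of_four_mul_le [Fintype ι] [Nonempty ι]
    (hf : Pairwise fun x y => 1 ≤ dist (f x) (f y)) {s : ℕ} (hs : 0 < s) {X : ι → Multiset α}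
    (c : ι → E) {a : α} (hXs : ∀ i, (X i).card = s) (ha : Multiset.replicate s a ≤ ∑ i, X i)
    (hcost : 4 * ∑ i, clusterCost f (X i) (c i) ≤ s) :
    ∃ i₀, ∃ X' : ι → Multiset α, X' i₀ = Multiset.replicate s a ∧ (∀ i, (X' i).card = s) ∧
      ∑ i, X' i = ∑ i, X i ∧
      ∑ i ∈ univ.erase i₀, clusterCost f (X' i) (c i) ≤ ∑ i, clusterCost f (X i) (c i) := by
  obtain ⟨i₀, hi₀⟩ := exists_count_mul_dist_le_sum f c a X
  have hcount : (s : ℝ) ≤ (∑ i, X i).count a := by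
    exact_mod_cast Multiset.le_count_iff_replicate_le.mpr ha
  have hnear : s * (4 * dist (c i₀) (f a)) ≤ s * 1 := by
    nlinarith [dist_nonneg (x := c i₀) (y := f a)]
  have hcost₀ : clusterCost f (X i₀) (c i₀) ≤ ∑ i, clusterCost f (X i) (c i) :=
    single_le_sum (fun i _ => clusterCost_nonneg f (X i) (c i)) (mem_univ i₀)
  exact ⟨i₀, exists_replicate_cluster_of_clusterCost_filter_ne_le f c hXs ha <|
    clusterCost_filter_ne_le f hf (le_of_mul_le_mul_left hnear (by exact_mod_cast hs))
      (by rw [hXs]; linarith)⟩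

end ClusterCost

open scoped ENNReal

section LpSpace

variable {d : ℕ}

theorem lpNorm_eq_norm {p : ℕ} (hp : 0 < p) (x : Fin d → ℝ) :
    lpNorm p x = ‖WithLp.toLp (p : ℝ≥0∞) x‖ := by
  rw [PiLp.norm_eq_sum (by simpa using hp)]
  simp [lpNorm, Real.rpow_natCast]

variable (p : ℕ)

noncomputable def intLp (x : Fin d → ℤ) : PiLp p (fun _ : Fin d => ℝ) :=
  WithLp.toLp p fun i => (x i : ℝ)

variable [Fact (1 ≤ (p : ℝ≥0∞))]

theorem costW_eq_clusterCost (T : Multiset (Fin d → ℤ)) (c : Fin d → ℝ) :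
    costW p T c = clusterCost (intLp p) T (WithLp.toLp p c) := by
  have hp : 0 < p := Nat.one_le_cast.mp (Fact.out : 1 ≤ (p : ℝ≥0∞))
  simp only [costW, clusterCost, dist_eq_norm, intLp, ← WithLp.toLp_sub, lpNorm_eq_norm hp]
  rfl

theorem one_le_dist_intLp : Pairwise fun x y : Fin d → ℤ => 1 ≤ dist (intLp p x) (intLp p y) := by
  intro x y hxy
  obtain ⟨i, hi⟩ := Function.ne_iff.mp hxy
  calc (1 : ℝ) ≤ |(x i : ℝ) - y i| := by exact_mod_cast Int.one_le_abs (sub_ne_zero.mpr hi)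
    _ = ‖(intLp p x - intLp p y).ofLp i‖ := by simp [intLp, Real.norm_eq_abs]
    _ ≤ dist (intLp p x) (intLp p y) := dist_eq_norm (intLp p x) _ ▸ PiLp.norm_apply_le _ i

end LpSpace

section OptCost

def clusteringCosts (p : ℕ) {d : ℕ} (P : Multiset (Fin d → ℤ)) (k s : ℕ) : Set ℝ :=
  {r | ∃ X : Fin k → Multiset (Fin d → ℤ),
    (∑ i, X i = P) ∧ (∀ i, (X i).card = s) ∧ r = ∑ i, clCost p (X i)}

variable {p d : ℕ}

theorem exists_costW_lt_clCost_add (T : Multiset (Fin d → ℤ)) {ε : ℝ} (hε : 0 < ε) :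
    ∃ c, costW p T c < clCost p T + ε := by
  obtain ⟨_, ⟨c, rfl⟩, hc⟩ := Real.lt_sInf_add_pos (Set.range_nonempty (costW p T)) hε
  exact ⟨c, hc⟩

variable {k s : ℕ} {P : Multiset (Fin d → ℤ)}

theorem optCost_eq_sInf : OptCost p P k s = sInf (clusteringCosts p P k s) := rfl

theorem optCost_eq_zero_of_not_exists
    (h : ¬∃ X : Fin k → Multiset (Fin d → ℤ), ∑ i, X i = P ∧ ∀ i, (X i).card = s) :
    OptCost p P k s = 0 := by
  rw [optCost_eq_sInf, ← Real.sInf_empty]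
  congr
  exact Set.eq_empty_of_forall_notMem fun _ ⟨X, hXP, hXs, _⟩ => h ⟨X, hXP, hXs⟩

theorem exists_sum_costW_lt_optCost_add
    (h : ∃ X : Fin k → Multiset (Fin d → ℤ), ∑ i, X i = P ∧ ∀ i, (X i).card = s) {ε : ℝ}
    (hε : 0 < ε) :
    ∃ (X : Fin k → Multiset (Fin d → ℤ)) (c : Fin k → Fin d → ℝ), ∑ i, X i = P ∧
      (∀ i, (X i).card = s) ∧ ∑ i, costW p (X i) (c i) < OptCost p P k s + ε := by
  obtain ⟨X, hXP, hXs⟩ := h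
  obtain ⟨_, ⟨X, hXP, hXs, rfl⟩, hX⟩ :=
    Real.lt_sInf_add_pos (s := clusteringCosts p P k s) ⟨_, X, hXP, hXs, rfl⟩ (half_pos hε)
  have hη : 0 < ε / 2 / (k + 1) := by positivity
  choose c hc using fun i => exists_costW_lt_clCost_add (p := p) (X i) hη
  refine ⟨X, c, hXP, hXs, ?_⟩
  calc ∑ i, costW p (X i) (c i) ≤ ∑ i, (clCost p (X i) + ε / 2 / (k + 1)) :=
        sum_le_sum fun i _ => (hc i).le
    _ = ∑ i, clCost p (X i) + k * (ε / 2 / (k + 1)) := by simp [sum_add_distrib]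
    _ < OptCost p P k s + ε := by
        have : k * (ε / 2 / (k + 1)) < ε / 2 := by
          rw [mul_div_assoc', div_lt_iff₀ (by positivity)]; nlinarith
        rw [optCost_eq_sInf]
        linarith

variable [Fact (1 ≤ (p : ℝ≥0∞))]

theorem costW_nonneg (T : Multiset (Fin d → ℤ)) (c : Fin d → ℝ) : 0 ≤ costW p T c :=
  costW_eq_clusterCost p T c ▸ clusterCost_nonneg _ _ _

theorem clCost_nonneg (T : Multiset (Fin d → ℤ)) : 0 ≤ clCost p T :=
  le_csInf (Set.range_nonempty _) (Set.forall_mem_range.mpr (costW_nonneg T))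

theorem clCost_le_costW (T : Multiset (Fin d → ℤ)) (c : Fin d → ℝ) : clCost p T ≤ costW p T c :=
  csInf_le ⟨0, Set.forall_mem_range.mpr (costW_nonneg T)⟩ (Set.mem_range_self c)

theorem clCost_replicate (n : ℕ) (a : Fin d → ℤ) : clCost p (Multiset.replicate n a) = 0 := by
  refine le_antisymm ?_ (clCost_nonneg _)
  simpa [costW_eq_clusterCost, intLp] using
    clCost_le_costW (p := p) (Multiset.replicate n a) fun i => (a i : ℝ)

theorem optCost_le_sum_clCost {X : Fin k → Multiset (Fin d → ℤ)} (hXP : ∑ i, X i = P)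
    (hXs : ∀ i, (X i).card = s) : OptCost p P k s ≤ ∑ i, clCost p (X i) :=
  csInf_le (s := clusteringCosts p P k s)
    ⟨0, by rintro _ ⟨X, -, -, rfl⟩; exact sum_nonneg fun i _ => clCost_nonneg _⟩ ⟨X, hXP, hXs, rfl⟩

theorem exists_clustering_add_replicate {Z : Fin k → Multiset (Fin d → ℤ)} (hZP : ∑ j, Z j = P)
    (hZs : ∀ j, (Z j).card = s) (a : Fin d → ℤ) :
    ∃ X : Fin (k + 1) → Multiset (Fin d → ℤ), ∑ i, X i = P + Multiset.replicate s a ∧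
      (∀ i, (X i).card = s) ∧ ∑ i, clCost p (X i) = ∑ j, clCost p (Z j) := by
  refine ⟨Fin.cons (Multiset.replicate s a) Z, ?_, Fin.cases (by simp) (by simpa using hZs), ?_⟩
  · simp [Fin.sum_univ_succ, hZP, add_comm]
  · simp [Fin.sum_univ_succ, clCost_replicate]

theorem optCost_add_replicate_le (a : Fin d → ℤ)
    (h : ∃ Z : Fin k → Multiset (Fin d → ℤ), ∑ j, Z j = P ∧ ∀ j, (Z j).card = s) :
    OptCost p (P + Multiset.replicate s a) (k + 1) s ≤ OptCost p P k s := by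
  obtain ⟨Z, hZP, hZs⟩ := h
  refine le_csInf ⟨_, Z, hZP, hZs, rfl⟩ ?_
  rintro _ ⟨Z, hZP, hZs, rfl⟩
  obtain ⟨X, hXP, hXs, hXcost⟩ := exists_clustering_add_replicate (p := p) hZP hZs a
  exact hXcost ▸ optCost_le_sum_clCost hXP hXs

theorem exists_clustering_sub_replicate (hs : 0 < s) {X : Fin (k + 1) → Multiset (Fin d → ℤ)}
    (c : Fin (k + 1) → Fin d → ℝ) {a : Fin d → ℤ} (hXs : ∀ i, (X i).card = s)
    (ha : Multiset.replicate s a ≤ ∑ i, X i) (hcost : 4 * ∑ i, costW p (X i) (c i) ≤ s) :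
    ∃ Z : Fin k → Multiset (Fin d → ℤ), ∑ j, Z j + Multiset.replicate s a = ∑ i, X i ∧
      (∀ j, (Z j).card = s) ∧ ∑ j, clCost p (Z j) ≤ ∑ i, costW p (X i) (c i) := by
  simp only [costW_eq_clusterCost] at hcost ⊢
  obtain ⟨i₀, X', hX'i₀, hX's, hX'sum, hX'cost⟩ := exists_replicate_cluster_of_four_mul_le
    (intLp p) (one_le_dist_intLp p) hs (fun i => WithLp.toLp p (c i)) hXs ha hcost
  have hsucc : ∀ g : Fin (k + 1) → ℝ, ∑ j, g (i₀.succAbove j) = ∑ i ∈ univ.erase i₀, g i :=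
    fun g => add_left_cancel ((Fin.sum_univ_succAbove g i₀).symm.trans
      (add_sum_erase _ _ (mem_univ i₀)).symm)
  refine ⟨fun j => X' (i₀.succAbove j), ?_, fun j => hX's _, ?_⟩
  · rw [← hX'sum, Fin.sum_univ_succAbove _ i₀, hX'i₀, add_comm]
  · calc ∑ j, clCost p (X' (i₀.succAbove j))
        ≤ ∑ j, clusterCost (intLp p) (X' (i₀.succAbove j)) (WithLp.toLp p (c (i₀.succAbove j))) :=
          sum_le_sum fun j _ => costW_eq_clusterCost p _ (c _) ▸ clCost_le_costW _ _
      _ ≤ _ := (hsucc fun i => clusterCost (intLp p) (X' i) (WithLp.toLp p (c i))).trans_le hX'cost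

theorem exists_clustering_sub_replicate_lt {a : Fin d → ℤ}
    (h : ∃ X : Fin (k + 1) → Multiset (Fin d → ℤ),
      ∑ i, X i = P + Multiset.replicate s a ∧ ∀ i, (X i).card = s)
    (hs : 0 < s) {ε : ℝ} (hε : 0 < ε)
    (hεs : 4 * (OptCost p (P + Multiset.replicate s a) (k + 1) s + ε) ≤ s) :
    ∃ Z : Fin k → Multiset (Fin d → ℤ), ∑ j, Z j = P ∧ (∀ j, (Z j).card = s) ∧
      ∑ j, clCost p (Z j) < OptCost p (P + Multiset.replicate s a) (k + 1) s + ε := by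
  obtain ⟨X, c, hXP, hXs, hXcost⟩ := exists_sum_costW_lt_optCost_add h hε
  obtain ⟨Z, hZP, hZs, hZcost⟩ := exists_clustering_sub_replicate hs c hXs
    (hXP ▸ Multiset.le_add_left _ _) (by linarith)
  exact ⟨Z, add_right_cancel (hZP.trans hXP), hZs, hZcost.trans_lt hXcost⟩

end OptCost

theorem removing_full_identical_cluster_preserves_opt_general
    {d k s B : ℕ} (p : ℕ) (hp : 1 ≤ p) (hk : 0 < k)
    (P : Multiset (Fin d → ℤ))
    (xj : Fin d → ℤ) (hS : Multiset.replicate s xj ≤ P)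
    (hOpt : OptCost p P k s ≤ (B : ℝ)) (hs : 4 * B + 1 ≤ s) :
    OptCost p (P - Multiset.replicate s xj) (k - 1) s = OptCost p P k s := by
  have : Fact (1 ≤ (p : ℝ≥0∞)) := ⟨by exact_mod_cast hp⟩
  obtain ⟨k, rfl⟩ := Nat.exists_eq_add_one_of_ne_zero hk.ne'
  obtain ⟨P, rfl⟩ : ∃ P', P = P' + Multiset.replicate s xj := ⟨_, (tsub_add_cancel_of_le hS).symm⟩
  rw [Nat.add_sub_cancel, Multiset.add_sub_cancel_right]
  by_cases hX : ∃ X : Fin (k + 1) → Multiset (Fin d → ℤ),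
      ∑ i, X i = P + Multiset.replicate s xj ∧ ∀ i, (X i).card = s
  · have hsB : (4 * B + 1 : ℝ) ≤ s := by exact_mod_cast hs
    have hεs : ∀ ε ≤ 1 / 4, 4 * (OptCost p (P + Multiset.replicate s xj) (k + 1) s + ε) ≤ s :=
      fun ε hε => by linarith
    obtain ⟨Z, hZP, hZs, -⟩ :=
      exists_clustering_sub_replicate_lt hX (by omega) (by norm_num) (hεs _ le_rfl)
    refine le_antisymm (le_of_forall_pos_lt_add fun ε hε => ?_)
      (optCost_add_replicate_le xj ⟨Z, hZP, hZs⟩)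
    obtain ⟨Z, hZP, hZs, hZcost⟩ := exists_clustering_sub_replicate_lt hX (by omega)
      (lt_min hε (by norm_num)) (hεs _ (min_le_right _ _))
    exact (optCost_le_sum_clCost hZP hZs).trans_lt
      (hZcost.trans_le (by gcongr; exact min_le_left _ _))
  · have hZ : ¬∃ Z : Fin k → Multiset (Fin d → ℤ), ∑ j, Z j = P ∧ ∀ j, (Z j).card = s :=
      fun ⟨Z, hZP, hZs⟩ =>
        hX ((exists_clustering_add_replicate (p := p) hZP hZs xj).imp fun _ h => ⟨h.1, h.2.1⟩)
    rw [optCost_eq_zero_of_not_exists hX, optCost_eq_zero_of_not_exists hZ]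

/-- removing a group of `s` identical points (one full cluster's worth)
preserves the optimum equal-clustering cost, provided `Opt(P,k) ≤ B` and `s ≥ 4B+1`. -/
theorem removing_full_identical_cluster_preserves_opt
    {d k s B : ℕ} (p : ℕ) (hp : 1 ≤ p) (hk : 0 < k)
    (P : Multiset (Fin d → ℤ)) (hP : P.card = s * k)
    (xj : Fin d → ℤ) (hS : Multiset.replicate s xj ≤ P)
    (hOpt : OptCost p P k s ≤ (B : ℝ)) (hs : 4 * B + 1 ≤ s) :
    OptCost p (P - Multiset.replicate s xj) (k - 1) s = OptCost p P k s :=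
  removing_full_identical_cluster_preserves_opt_general p hp hk P xj hS hOpt hs
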